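/- arXiv:0911.2385 — 2 statements merged into one kernel-verified Lean document; each statement's English description precedes it below -/
import Mathlib

section
/- For every c > 0 and every even L ∈ ℕ with L ≥ 2, one has W(τ_1^{(L)} ≥ c · r^{−L}) ≥ (1 − r^{L−1})^{⌊c r^{−L}⌋}. -/
/-!
Let `y m` be the probability that the alternating word occurs in none of the windows ending
at `L + 1, …, m`. Avoiding the windows up to `m` but not the one ending at `m + 1` forces
avoidance up to `m - L` (a condition on coordinates before `m - L`) and an occurrence in the
window `[m + 1 - L, m]`, so by independence `y m ≤ y (m + 1) + r ^ L * y (m - L)`.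
Since `r ≤ (1 - r ^ (L - 1)) ^ L` by Bernoulli's inequality, strong induction turns this into
`(1 - r ^ (L - 1)) * y m ≤ y (m + 1)`, hence `y (L + N) ≥ (1 - r ^ (L - 1)) ^ N`. Finally the
word occurs almost surely (disjoint blocks of length `L` are independent trials), so on the
event counted by `y (L + N)` the regeneration time exceeds `L + N`.
-/

open MeasureTheory ProbabilityTheory

/-- The alternating pattern `(+, −, +, −, …)`: `0` codes `+`, `1` codes `−`, `2` codes `0`. -/
def altPat (j : ℕ) : Fin 3 := if j % 2 = 0 then 0 else 1

/-- The first regeneration time `τ₁^{(L)}`: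
the first `n > L` such that `(ε_{n−L}, …, ε_{n−1})` equals the alternating word of length `L`. -/
noncomputable def tau1 (L : ℕ) (ε : ℕ → Fin 3) : ℕ :=
  sInf {n : ℕ | L < n ∧ ∀ j < L, ε (n - L + j) = altPat j}

section DependsOn

variable {ι α : Type*}

lemma DependsOn.mem_compl {A : Set (ι → α)} {S : Set ι} (hA : DependsOn (· ∈ A) S) :
    DependsOn (· ∈ Aᶜ) S :=
  fun _ _ h => congrArg Not (hA h)

lemma dependsOn_mem_biInter {κ : Type*} {s : Set κ} {A : κ → Set (ι → α)} {S : Set ι}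
    (hA : ∀ k ∈ s, DependsOn (· ∈ A k) S) : DependsOn (· ∈ ⋂ k ∈ s, A k) S := by
  intro x y h
  simp only [Set.mem_iInter]
  exact propext (forall₂_congr fun k hk => (hA k hk h).to_iff)

lemma DependsOn.preimage_image_restrict {A : Set (ι → α)} {S : Finset ι}
    (hA : DependsOn (· ∈ A) (S : Set ι)) :
    (fun ε (i : S) => ε i) ⁻¹' ((fun ε (i : S) => ε i) '' A) = A := by
  refine (Set.subset_preimage_image _ _).antisymm' ?_
  rintro ε ⟨ε', hε', hεε'⟩
  exact (hA fun i hi => congrFun hεε' ⟨i, hi⟩).mp hε'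

variable [MeasurableSpace α] [MeasurableSingletonClass α] [Countable α]

lemma measure_inter_eq_mul_of_dependsOn {μ : Measure (ι → α)}
    (hμ : iIndepFun (fun i (ε : ι → α) => ε i) μ) {S T : Finset ι} (hST : Disjoint S T)
    {A B : Set (ι → α)} (hA : DependsOn (· ∈ A) (S : Set ι)) (hB : DependsOn (· ∈ B) (T : Set ι)) :
    μ (A ∩ B) = μ A * μ B := by
  rw [← hA.preimage_image_restrict, ← hB.preimage_image_restrict]
  exact (hμ.indepFun_finset S T hST measurable_pi_apply).measure_inter_preimage_eq_mul _ _
    (Set.to_countable _).measurableSet (Set.to_countable _).measurableSet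

end DependsOn

section Occurrences

variable {α : Type*}

def occursAt (u : ℕ → α) (L n : ℕ) : Set (ℕ → α) := {ε | ∀ j < L, ε (n - L + j) = u j}

def avoidsUpTo (u : ℕ → α) (L m : ℕ) : Set (ℕ → α) :=
  ⋂ n ∈ Finset.Icc (L + 1) m, (occursAt u L n)ᶜ

variable (u : ℕ → α) (L : ℕ)

lemma dependsOn_mem_occursAt (n : ℕ) :
    DependsOn (· ∈ occursAt u L n) (Finset.Ico (n - L) (n - L + L) : Set ℕ) := by
  intro x y h
  refine propext (forall₂_congr fun j hj => ?_)
  rw [h _ (by simp only [Finset.coe_Ico, Set.mem_Ico]; omega)]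

lemma dependsOn_mem_avoidsUpTo (m : ℕ) :
    DependsOn (· ∈ avoidsUpTo u L m) (Finset.Ico 1 m : Set ℕ) := by
  refine dependsOn_mem_biInter fun n hn =>
    ((dependsOn_mem_occursAt u L n).mono ?_).mem_compl
  intro i
  simp only [Finset.coe_Ico, Set.mem_Ico, Finset.coe_Icc, Set.mem_Icc] at hn ⊢
  omega

lemma avoidsUpTo_antitone : Antitone (avoidsUpTo u L) := by
  intro m m' h ε hε
  simp only [avoidsUpTo, Set.mem_iInter, Finset.mem_Icc] at hε ⊢
  exact fun n hn => hε n ⟨hn.1, hn.2.trans h⟩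

lemma mem_avoidsUpTo_succ {m : ℕ} {ε : ℕ → α} (hε : ε ∈ avoidsUpTo u L m)
    (hocc : ε ∉ occursAt u L (m + 1)) : ε ∈ avoidsUpTo u L (m + 1) := by
  simp only [avoidsUpTo, Set.mem_iInter, Finset.mem_Icc] at hε ⊢
  intro n hn
  rcases (Nat.le_succ_iff.mp hn.2) with h | rfl
  · exact hε n ⟨hn.1, h⟩
  · exact hocc

lemma avoidsUpTo_self : avoidsUpTo u L L = Set.univ := by
  simp [avoidsUpTo]

variable [MeasurableSpace α] [MeasurableSingletonClass α]

lemma measurableSet_occursAt (n : ℕ) : MeasurableSet (occursAt u L n) := by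
  simp only [occursAt, Set.ofPred_forall]
  exact .iInter fun j => .iInter fun _ =>
    measurableSet_singleton (u j) |>.preimage (measurable_pi_apply (n - L + j))

lemma measurableSet_avoidsUpTo (m : ℕ) : MeasurableSet (avoidsUpTo u L m) :=
  Finset.measurableSet_biInter _ fun n _ => (measurableSet_occursAt u L n).compl

end Occurrences

section Independence

variable {α : Type*} [MeasurableSpace α] [MeasurableSingletonClass α] {μ : Measure (ℕ → α)}
  (u : ℕ → α) (L : ℕ)

lemma measure_occursAt (hμ : iIndepFun (fun i (ε : ℕ → α) => ε i) μ) {w : Measure α}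
    (hmarg : ∀ i, μ.map (fun ε => ε i) = w) (n : ℕ) :
    μ (occursAt u L n) = ∏ j ∈ Finset.range L, w {u j} := by
  have hwindow := (hμ.precomp (g := fun j => n - L + j) (add_right_injective _))
    |>.measure_inter_preimage_eq_mul (Finset.range L) (sets := fun j => {u j})
      fun _ _ => measurableSet_singleton _
  convert hwindow using 1
  · congr 1
    ext ε
    simp [occursAt]
  · refine Finset.prod_congr rfl fun j _ => ?_
    rw [← hmarg (n - L + j), Measure.map_apply (measurable_pi_apply _) (measurableSet_singleton _)]

variable [Countable α]

lemma measureReal_avoidsUpTo_le (hμ : iIndepFun (fun i (ε : ℕ → α) => ε i) μ) (m : ℕ) :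
    μ.real (avoidsUpTo u L m) ≤ μ.real (avoidsUpTo u L (m + 1))
      + μ.real (avoidsUpTo u L (m - L)) * μ.real (occursAt u L (m + 1)) := by
  have hcover : avoidsUpTo u L m
      ⊆ avoidsUpTo u L (m + 1) ∪ (avoidsUpTo u L (m - L) ∩ occursAt u L (m + 1)) := by
    intro ε hε
    by_cases hocc : ε ∈ occursAt u L (m + 1)
    · exact Or.inr ⟨avoidsUpTo_antitone u L (Nat.sub_le m L) hε, hocc⟩
    · exact Or.inl (mem_avoidsUpTo_succ u L hε hocc)
  have hindep : μ.real (avoidsUpTo u L (m - L) ∩ occursAt u L (m + 1))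
      = μ.real (avoidsUpTo u L (m - L)) * μ.real (occursAt u L (m + 1)) := by
    simp only [measureReal_def, ← ENNReal.toReal_mul]
    rw [measure_inter_eq_mul_of_dependsOn hμ ?_ (dependsOn_mem_avoidsUpTo u L _)
      (dependsOn_mem_occursAt u L _)]
    rw [Finset.disjoint_left]
    intro i
    simp only [Finset.mem_Ico]
    omega
  have := hμ.isProbabilityMeasure
  calc μ.real (avoidsUpTo u L m)
      ≤ μ.real (avoidsUpTo u L (m + 1) ∪ (avoidsUpTo u L (m - L) ∩ occursAt u L (m + 1))) :=
        measureReal_mono hcover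
    _ ≤ _ := measureReal_union_le _ _
    _ = _ := by rw [hindep]

lemma measure_iInter_compl_occursAt_blocks (hμ : iIndepFun (fun i (ε : ℕ → α) => ε i) μ)
    {q : ENNReal} (hq : ∀ n, μ (occursAt u L n) = q) (K : ℕ) :
    μ (⋂ k ∈ Finset.range K, (occursAt u L (k * L + L + 1))ᶜ) = (1 - q) ^ K := by
  have := hμ.isProbabilityMeasure
  induction K with
  | zero => simp
  | succ K ih =>
    rw [Finset.range_add_one, Finset.set_biInter_insert, Set.inter_comm,
      measure_inter_eq_mul_of_dependsOn hμ (S := Finset.Ico 1 (K * L + 1))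
        (T := Finset.Ico (K * L + 1) (K * L + 1 + L)) ?_ ?_ ?_,
      ih, prob_compl_eq_one_sub (measurableSet_occursAt u L _), hq, pow_succ]
    · rw [Finset.disjoint_left]
      intro i
      simp only [Finset.mem_Ico]
      omega
    · refine dependsOn_mem_biInter fun k hk => ((dependsOn_mem_occursAt u L _).mono ?_).mem_compl
      have hkK : k * L + L ≤ K * L := by
        have := Nat.mul_le_mul_right L (Finset.mem_range.mp hk)
        rwa [Nat.succ_mul] at this
      intro i
      simp only [Finset.coe_Ico, Set.mem_Ico]
      omega
    · refine ((dependsOn_mem_occursAt u L _).mono ?_).mem_compl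
      intro i
      simp only [Finset.coe_Ico, Set.mem_Ico]
      omega

lemma ae_exists_occursAt (hμ : iIndepFun (fun i (ε : ℕ → α) => ε i) μ)
    {q : ENNReal} (hq : ∀ n, μ (occursAt u L n) = q) (hq0 : q ≠ 0) :
    ∀ᵐ ε ∂μ, ∃ n, L < n ∧ ε ∈ occursAt u L n := by
  rw [ae_iff]
  refine le_antisymm (ge_of_tendsto' (ENNReal.tendsto_pow_atTop_nhds_zero_of_lt_one
    (ENNReal.sub_lt_self ENNReal.one_ne_top one_ne_zero hq0)) fun K => ?_) bot_le
  rw [← measure_iInter_compl_occursAt_blocks u L hμ hq K]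
  refine measure_mono fun ε hε => ?_
  simp only [Set.mem_ofPred_eq, not_exists, not_and, Set.mem_iInter] at hε ⊢
  exact fun k _ => hε _ (by omega)

end Independence

lemma natCast_mul_pow_pred_le_one_sub {r : ℝ} (hr0 : 0 ≤ r) (hr : r ≤ 1 / 3) {K : ℕ}
    (hK : 2 ≤ K) : K * r ^ (K - 1) ≤ 1 - r := by
  induction K, hK using Nat.le_induction with
  | base => norm_num; linarith
  | succ K hK ih =>
    obtain ⟨k, rfl⟩ : ∃ k, K = k + 1 := ⟨K - 1, by omega⟩
    have hk : (1 : ℝ) ≤ k := by exact_mod_cast (by omega : 1 ≤ k)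
    have hstep : ((k : ℝ) + 1 + 1) * r ≤ k + 1 := by nlinarith
    calc ((k + 1 + 1 : ℕ) : ℝ) * r ^ (k + 1 + 1 - 1) = ((k + 1 + 1) * r) * r ^ k := by
          push_cast
          ring
      _ ≤ (k + 1) * r ^ k := mul_le_mul_of_nonneg_right hstep (pow_nonneg hr0 k)
      _ ≤ 1 - r := by simpa using ih

lemma le_one_sub_pow_pred_pow {r : ℝ} (hr0 : 0 ≤ r) (hr : r ≤ 1 / 3) {L : ℕ} (hL : 2 ≤ L) :
    r ≤ (1 - r ^ (L - 1)) ^ L := by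
  have hbernoulli := one_add_mul_le_pow (a := -r ^ (L - 1)) ?_ L
  · rw [mul_neg, ← sub_eq_add_neg, ← sub_eq_add_neg] at hbernoulli
    linarith [natCast_mul_pow_pred_le_one_sub hr0 hr hL]
  · have : r ^ (L - 1) ≤ 1 := pow_le_one₀ hr0 (by linarith)
    linarith

lemma pow_mul_le_of_forall_mul_le_succ {y : ℕ → ℝ} {b : ℝ} (hb : 0 ≤ b) {m d : ℕ}
    (h : ∀ k < m + d, b * y k ≤ y (k + 1)) : b ^ d * y m ≤ y (m + d) := by
  induction d with
  | zero => simp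
  | succ d ih =>
    calc b ^ (d + 1) * y m = b * (b ^ d * y m) := by ring
      _ ≤ b * y (m + d) := mul_le_mul_of_nonneg_left (ih fun k hk => h k (by omega)) hb
      _ ≤ y (m + d + 1) := h _ (by omega)

/-- `hrec` is meant for `m ≥ L`; for `m < L` the index `m - L` truncates to `0`, and the
argument still goes through because `(1 - a) ^ L ≤ (1 - a) ^ m`. -/
lemma mul_le_succ_of_le_add_mul_sub {y : ℕ → ℝ} {a δ : ℝ} {L : ℕ} (ha0 : 0 ≤ a) (ha1 : a ≤ 1)
    (hδ : δ ≤ (1 - a) ^ L) (hy : ∀ m, 0 ≤ y m)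
    (hrec : ∀ m, y m ≤ y (m + 1) + a * δ * y (m - L)) (m : ℕ) :
    (1 - a) * y m ≤ y (m + 1) := by
  induction m using Nat.strong_induction_on with
  | _ m ih =>
    have hchain := pow_mul_le_of_forall_mul_le_succ (y := y) (m := m - L) (d := min m L)
      (by linarith) fun k hk => ih k (by omega)
    rw [show m - L + min m L = m by omega] at hchain
    have hδy : δ * y (m - L) ≤ y m := calc
      δ * y (m - L) ≤ (1 - a) ^ min m L * y (m - L) := by
        gcongr
        · exact hy _
        · exact hδ.trans (pow_le_pow_of_le_one (by linarith) (by linarith) (min_le_right m L))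
      _ ≤ y m := hchain
    nlinarith [hrec m, mul_le_mul_of_nonneg_left hδy ha0]

lemma lt_tau1_of_mem_avoidsUpTo {L m : ℕ} {ε : ℕ → Fin 3} (hε : ε ∈ avoidsUpTo altPat L m)
    (hocc : ∃ n, L < n ∧ ε ∈ occursAt altPat L n) : m < tau1 L ε := by
  have htau : L < tau1 L ε ∧ ε ∈ occursAt altPat L (tau1 L ε) := Nat.sInf_mem hocc
  simp only [avoidsUpTo, Set.mem_iInter, Finset.mem_Icc] at hε
  by_contra! hle
  exact hε _ ⟨htau.1, hle⟩ htau.2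

theorem tau_large_probability_lower_bound_general
    (p : ℝ) (hp : 1 / 2 < p) (hp1 : p < 1)
    (r : ℝ) (hr : r = (1 - p) / 2)
    (w : Measure (Fin 3))
    (hw0 : w {0} = ENNReal.ofReal r) (hw1 : w {1} = ENNReal.ofReal r)
    (W : Measure (ℕ → Fin 3))
    (hiid : iIndepFun (fun i (ε : ℕ → Fin 3) => ε i) W)
    (hmarg : ∀ i : ℕ, W.map (fun ε => ε i) = w)
    (c : ℝ)
    (L : ℕ) (hL2 : 2 ≤ L) :
    ENNReal.ofReal ((1 - r ^ (L - 1)) ^ (⌊c / r ^ L⌋₊))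
      ≤ W {ε | c / r ^ L ≤ (tau1 L ε : ℝ)} := by
  have := hiid.isProbabilityMeasure
  have hr0 : 0 < r := by rw [hr]; linarith
  have hrL : r ^ (L - 1) ≤ 1 := pow_le_one₀ hr0.le (by linarith)
  have hocc (n : ℕ) : W (occursAt altPat L n) = ENNReal.ofReal r ^ L := by
    rw [measure_occursAt altPat L hiid hmarg n, Finset.prod_congr rfl fun j _ => ?_,
      Finset.prod_const, Finset.card_range]
    unfold altPat
    split_ifs <;> assumption
  have hrec (m : ℕ) : W.real (avoidsUpTo altPat L m) ≤ W.real (avoidsUpTo altPat L (m + 1))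
      + r ^ (L - 1) * r * W.real (avoidsUpTo altPat L (m - L)) := by
    have h := measureReal_avoidsUpTo_le altPat L hiid m
    rw [measureReal_def W (occursAt altPat L (m + 1)), hocc, ENNReal.toReal_pow,
      ENNReal.toReal_ofReal hr0.le, mul_comm] at h
    rwa [← pow_succ, Nat.sub_add_cancel (by omega : 1 ≤ L)]
  have hstep := mul_le_succ_of_le_add_mul_sub (pow_nonneg hr0.le _) hrL
    (le_one_sub_pow_pred_pow hr0.le (by linarith) hL2) (fun _ => measureReal_nonneg) hrec
  set N := ⌊c / r ^ L⌋₊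
  have hN : (1 - r ^ (L - 1)) ^ N ≤ W.real (avoidsUpTo altPat L (L + N)) := by
    simpa [avoidsUpTo_self] using
      pow_mul_le_of_forall_mul_le_succ (m := L) (d := N) (by linarith) fun k _ => hstep k
  calc ENNReal.ofReal ((1 - r ^ (L - 1)) ^ N) ≤ W (avoidsUpTo altPat L (L + N)) := by
        rw [← ofReal_measureReal]
        exact ENNReal.ofReal_le_ofReal hN
    _ = W (avoidsUpTo altPat L (L + N) ∩ {ε | ∃ n, L < n ∧ ε ∈ occursAt altPat L n}) :=
        (measure_inter_conull (ae_exists_occursAt altPat L hiid hocc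
          (pow_ne_zero _ (ENNReal.ofReal_pos.2 hr0).ne'))).symm
    _ ≤ W {ε | c / r ^ L ≤ (tau1 L ε : ℝ)} := measure_mono fun ε ⟨hε, hε_occ⟩ => by
        have hτ : (N : ℝ) + 1 ≤ tau1 L ε := by
          exact_mod_cast (lt_tau1_of_mem_avoidsUpTo hε hε_occ).trans_le' (by omega)
        exact (Nat.lt_floor_add_one _).le.trans hτ

/-- lower bound on the probability that the regeneration time is large:
`W(τ₁^{(L)} ≥ c·r^{−L}) ≥ (1 − r^{L−1})^{⌊c·r^{−L}⌋}`. -/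
theorem tau_large_probability_lower_bound
    (p : ℝ) (hp : 1 / 2 < p) (hp1 : p < 1)
    (r : ℝ) (hr : r = (1 - p) / 2)
    (w : Measure (Fin 3)) (hwprob : IsProbabilityMeasure w)
    (hw0 : w {0} = ENNReal.ofReal r) (hw1 : w {1} = ENNReal.ofReal r)
    (hw2 : w {2} = ENNReal.ofReal p)
    (W : Measure (ℕ → Fin 3)) (hWprob : IsProbabilityMeasure W)
    (hiid : iIndepFun (fun i (ε : ℕ → Fin 3) => ε i) W)
    (hmarg : ∀ i : ℕ, W.map (fun ε => ε i) = w)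
    (c : ℝ) (hc : 0 < c)
    (L : ℕ) (hL : Even L) (hL2 : 2 ≤ L) :
    ENNReal.ofReal ((1 - r ^ (L - 1)) ^ (⌊c / r ^ L⌋₊))
      ≤ W {ε | c / r ^ L ≤ (tau1 L ε : ℝ)} :=
  tau_large_probability_lower_bound_general p hp hp1 r hr w hw0 hw1 W hiid hmarg c L hL2
end

section
/- Let U > 0, V > 0 and ρ ∈ (0, 1), and set c₃ = (4/U²)·ρ·(1 − ρ)·(2ρ − 1)·f(U, V). Then c₃ > 0 if ρ < 1/2, c₃ = 0 if ρ = 1/2, and c₃ < 0 if ρ > 1/2. -/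
/-- `f(U,V) = (2U+V)/√(V²+2UV) − (2U+2V)/√(V²+UV) + 1`. -/
noncomputable def fUV (U V : ℝ) : ℝ :=
  (2 * U + V) / Real.sqrt (V ^ 2 + 2 * U * V)
    - (2 * U + 2 * V) / Real.sqrt (V ^ 2 + U * V) + 1

/-!
With `a = √(2U + V)`, `b = √(U + V)` and `c = √V` one has `f(U, V) = (a + c - 2b) / c`.
Since `U + V` is the midpoint of `V` and `2U + V`, strict concavity of the square root gives
`a + c < 2b`, so `f(U, V) < 0`; the sign of `c₃` is then the sign of `1 - 2ρ`.
-/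

open Real

lemma Real.sqrt_add_sqrt_lt_two_mul_sqrt_midpoint {x y : ℝ} (hx : 0 ≤ x) (hy : 0 ≤ y)
    (hxy : x ≠ y) : √x + √y < 2 * √((x + y) / 2) := by
  have h := strictConcaveOn_sqrt.2 (Set.mem_Ici.2 hx) (Set.mem_Ici.2 hy) hxy
    (by norm_num : (0 : ℝ) < 1 / 2) (by norm_num : (0 : ℝ) < 1 / 2) (by norm_num)
  simp only [smul_eq_mul] at h
  rw [show 1 / 2 * x + 1 / 2 * y = (x + y) / 2 by ring] at h
  linarith

lemma Real.div_sqrt_mul_eq_sqrt_div_sqrt {x : ℝ} (hx : 0 ≤ x) (y : ℝ) :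
    y / √(x * y) = √y / √x := by
  rw [sqrt_mul hx, div_mul_eq_div_div_swap, div_sqrt]

lemma fUV_eq (U : ℝ) {V : ℝ} (hV : 0 < V) :
    fUV U V = (√(2 * U + V) + √V - 2 * √(U + V)) / √V := by
  have h₁ : V ^ 2 + 2 * U * V = V * (2 * U + V) := by ring
  have h₂ : V ^ 2 + U * V = V * (U + V) := by ring
  rw [fUV, h₁, h₂, show 2 * U + 2 * V = 2 * (U + V) by ring, mul_div_assoc,
    div_sqrt_mul_eq_sqrt_div_sqrt hV.le, div_sqrt_mul_eq_sqrt_div_sqrt hV.le]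
  have : √V ≠ 0 := (sqrt_pos.2 hV).ne'
  field_simp
  ring

lemma fUV_neg {U V : ℝ} (hU : 0 < U) (hV : 0 < V) : fUV U V < 0 := by
  rw [fUV_eq U hV]
  refine div_neg_of_neg_of_pos ?_ (sqrt_pos.2 hV)
  have h := sqrt_add_sqrt_lt_two_mul_sqrt_midpoint (by positivity : 0 ≤ 2 * U + V) hV.le
    (by linarith)
  rw [show (2 * U + V + V) / 2 = U + V by ring] at h
  linarith

/-- the sign of `c₃ = (4/U²)·ρ(1−ρ)(2ρ−1)·f(U,V)` is determined by
the position of `ρ` relative to `1/2`. -/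
theorem c3_sign
    (U V ρ : ℝ) (hU : 0 < U) (hV : 0 < V) (hρ0 : 0 < ρ) (hρ1 : ρ < 1)
    (c₃ : ℝ) (hc₃ : c₃ = (4 / U ^ 2) * ρ * (1 - ρ) * (2 * ρ - 1) * fUV U V) :
    (ρ < 1 / 2 → 0 < c₃) ∧ (ρ = 1 / 2 → c₃ = 0) ∧ (1 / 2 < ρ → c₃ < 0) := by
  have hf : fUV U V < 0 := fUV_neg hU hV
  have hk : 0 < 4 / U ^ 2 * ρ * (1 - ρ) := by
    have : 0 < 1 - ρ := by linarith
    positivity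
  refine ⟨fun h => ?_, fun h => ?_, fun h => ?_⟩
  · rw [hc₃]
    exact mul_pos_of_neg_of_neg (mul_neg_of_pos_of_neg hk (by linarith)) hf
  · rw [hc₃, h]; ring
  · rw [hc₃]
    exact mul_neg_of_pos_of_neg (mul_pos hk (by linarith)) hf
end
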